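/- Let (H, Δ, ε) be a bialgebra over a commutative ring k, F a Drinfel'd twist on H, and A a left H-module algebra with product · and unit 1. Write F⁻¹ = Σⱼ uⱼ⊗vⱼ and define the twisted product a ⋆_F b := Σⱼ (uⱼ▷a)·(vⱼ▷b) for a, b ∈ A. Then ⋆_F is an associative product on A with unit 1, and A with ⋆_F and the unchanged H-action is a left module algebra over the twisted bialgebra (H, Δ_F, ε): writing Δ_F(ξ) = Σ ξ^F₍₁₎⊗ξ^F₍₂₎, one has ξ▷(a ⋆_F b) = Σ (ξ^F₍₁₎▷a) ⋆_F (ξ^F₍₂₎▷b) and ξ▷1 = ε(ξ)·1 for all ξ ∈ H and a, b ∈ A. -/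

import Mathlib

/-!
Write `μ : A ⊗ A → A` for the product, so that `a ⋆_F b = μ (F⁻¹ ▷ (a ⊗ b))`. The module-algebra
axiom says `ξ ▷ μ x = μ (Δ ξ ▷ x)`: the action of `Δ ξ` can be pulled out of a product. Pulling the
inner products out of both bracketings, `(a ⋆_F b) ⋆_F c` and `a ⋆_F (b ⋆_F c)` become the action of
`(Δ ⊗ id)(F⁻¹) · (F⁻¹ ⊗ 1)` and `(id ⊗ Δ)(F⁻¹) · (1 ⊗ F⁻¹)` on `a ⊗ b ⊗ c`, followed by the triple
product; these two elements of `H ⊗ H ⊗ H` agree because they are the inverses of the two sides of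
the cocycle identity. The counit normalization of `F` (hence of `F⁻¹`) makes `1` a unit, and
`ξ ▷ (a ⋆_F b) = μ (Δ ξ · F⁻¹ ▷ (a ⊗ b)) = μ (F⁻¹ · Δ_F ξ ▷ (a ⊗ b))`.
-/

open TensorProduct

noncomputable section

namespace Stmt

variable (k : Type*) [CommRing k] (H : Type*) [Ring H] [Bialgebra k H]
variable (A : Type*) [Ring A] [Algebra k A]
variable [Module H A] [IsScalarTower k H A] [SMulCommClass k H A]

def actE : H →ₗ[k] A →ₗ[k] A :=
  LinearMap.mk₂ k (fun ξ a => ξ • a)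
    (fun ξ η a => add_smul ξ η a)
    (fun c ξ a => smul_assoc c ξ a)
    (fun ξ a b => smul_add ξ a b)
    (fun c ξ a => (smul_comm c ξ a).symm)

/-- The componentwise action of `T ∈ H ⊗ H` on `A ⊗ A`. -/
def act2 (T : H ⊗[k] H) : A ⊗[k] A →ₗ[k] A ⊗[k] A :=
  TensorProduct.homTensorHomMap (RingHom.id k) A A A A
    ((TensorProduct.map (actE k H A) (actE k H A)) T)

/-- For a `k`-bilinear map `Bm` on `A` and `T = Σ u ⊗ v ∈ H ⊗ H`, the bilinear map
`(a, b) ↦ Σ Bm (u • a) (v • b)` (a "Sweedler sum"). -/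
def hodgeL (Bm : A →ₗ[k] A →ₗ[k] A) (T : H ⊗[k] H) : A →ₗ[k] A →ₗ[k] A :=
  (TensorProduct.mk k A A).compr₂ ((TensorProduct.lift Bm).comp (act2 k H A T))

section BialgebraMaps

def Δ : H →ₐ[k] H ⊗[k] H := Bialgebra.comulAlgHom k H

def ε : H →ₐ[k] k := Bialgebra.counitAlgHom k H

/-- Leg embedding `x ↦ x₁₂` of `H ⊗ H` into `H ⊗ H ⊗ H`. -/
def ι₁₂ : H ⊗[k] H →ₐ[k] H ⊗[k] (H ⊗[k] H) :=
  Algebra.TensorProduct.map (AlgHom.id k H) Algebra.TensorProduct.includeLeft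

/-- Leg embedding `x ↦ x₂₃` of `H ⊗ H` into `H ⊗ H ⊗ H`. -/
def ι₂₃ : H ⊗[k] H →ₐ[k] H ⊗[k] (H ⊗[k] H) :=
  Algebra.TensorProduct.includeRight

/-- `Δ ⊗ id : H ⊗ H → H ⊗ H ⊗ H` (re-associated). -/
def Δ₁ : H ⊗[k] H →ₐ[k] H ⊗[k] (H ⊗[k] H) :=
  (Algebra.TensorProduct.assoc k k k H H H).toAlgHom.comp
    (Algebra.TensorProduct.map (Δ k H) (AlgHom.id k H))

/-- `id ⊗ Δ : H ⊗ H → H ⊗ H ⊗ H`. -/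
def Δ₂ : H ⊗[k] H →ₐ[k] H ⊗[k] (H ⊗[k] H) :=
  Algebra.TensorProduct.map (AlgHom.id k H) (Δ k H)

/-- `ε ⊗ id : H ⊗ H → H`. -/
def ε₁ : H ⊗[k] H →ₐ[k] H :=
  (Algebra.TensorProduct.lid k H).toAlgHom.comp
    (Algebra.TensorProduct.map (ε k H) (AlgHom.id k H))

/-- `id ⊗ ε : H ⊗ H → H`. -/
def ε₂ : H ⊗[k] H →ₐ[k] H :=
  (Algebra.TensorProduct.rid k k H).toAlgHom.comp
    (Algebra.TensorProduct.map (AlgHom.id k H) (ε k H))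

end BialgebraMaps

theorem mul_rev_eq_of_mul_eq {M : Type*} [Monoid M] {p p' q q' r r' s s' : M}
    (hp : p' * p = 1) (hq : q' * q = 1) (hr : r * r' = 1) (hs : s * s' = 1)
    (h : p * q = r * s) : q' * p' = s' * r' :=
  calc q' * p' = q' * p' * (r * s * (s' * r')) := by
        rw [mul_assoc r, ← mul_assoc s, hs, one_mul, hr, mul_one]
    _ = q' * (p' * p) * q * (s' * r') := by rw [← h]; simp only [mul_assoc]
    _ = s' * r' := by rw [hp, mul_one, hq, one_mul]

theorem cocycle_of_inv {F G : H ⊗[k] H} (hFG : F * G = 1) (hGF : G * F = 1)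
    (hF : ι₁₂ k H F * Δ₁ k H F = ι₂₃ k H F * Δ₂ k H F) :
    Δ₁ k H G * ι₁₂ k H G = Δ₂ k H G * ι₂₃ k H G := by
  have hl (φ : H ⊗[k] H →ₐ[k] H ⊗[k] (H ⊗[k] H)) : φ G * φ F = 1 := by
    rw [← map_mul, hGF, map_one]
  have hr (φ : H ⊗[k] H →ₐ[k] H ⊗[k] (H ⊗[k] H)) : φ F * φ G = 1 := by
    rw [← map_mul, hFG, map_one]
  exact mul_rev_eq_of_mul_eq (hl _) (hl _) (hr _) (hr _) hF

section TensorAction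

variable {k H} {M : Type*} [AddCommMonoid M] [Module k M] [Module H M] [IsScalarTower k H M]

def act2AlgHom : H ⊗[k] H →ₐ[k] Module.End k (M ⊗[k] M) :=
  Module.endTensorEndAlgHom.comp
    (Algebra.TensorProduct.map (Algebra.lsmul k k M) (Algebra.lsmul k k M))

def act3AlgHom : H ⊗[k] (H ⊗[k] H) →ₐ[k] Module.End k (M ⊗[k] (M ⊗[k] M)) :=
  Module.endTensorEndAlgHom.comp (Algebra.TensorProduct.map (Algebra.lsmul k k M) act2AlgHom)

@[simp]
theorem act2AlgHom_tmul_tmul (ξ η : H) (a b : M) :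
    act2AlgHom (ξ ⊗ₜ η) (a ⊗ₜ[k] b) = (ξ • a) ⊗ₜ (η • b) :=
  rfl

theorem act3AlgHom_tmul (ξ : H) (T : H ⊗[k] H) :
    act3AlgHom (M := M) (ξ ⊗ₜ T) = TensorProduct.map (Algebra.lsmul k k M ξ) (act2AlgHom T) :=
  rfl

theorem act3AlgHom_ι₁₂_comp_assoc (T : H ⊗[k] H) :
    act3AlgHom (ι₁₂ k H T) ∘ₗ (TensorProduct.assoc k M M M).toLinearMap =
      (TensorProduct.assoc k M M M).toLinearMap ∘ₗ (act2AlgHom T).rTensor M := by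
  induction T using TensorProduct.induction_on with
  | zero => simp
  | tmul ξ η => ext a b c; simp [ι₁₂, act3AlgHom_tmul]
  | add S T hS hT => rw [map_add, map_add, LinearMap.add_comp, hS, hT, map_add,
      LinearMap.rTensor_add, LinearMap.comp_add]

theorem act3AlgHom_ι₂₃ (T : H ⊗[k] H) :
    act3AlgHom (ι₂₃ k H T) = (act2AlgHom (M := M) T).lTensor M := by
  rw [ι₂₃, Algebra.TensorProduct.includeRight_apply, act3AlgHom_tmul, map_one]
  rfl

end TensorAction

section TwistedProduct

variable {k H} {B : Type*} [Semiring B] [Algebra k B] [Module H B] [IsScalarTower k H B]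

local notation "μ" => LinearMap.mul' k B

/-- With `G = F⁻¹` this is the twisted product `⋆_F`, read on `B ⊗ B`. -/
def twistedMul' (G : H ⊗[k] H) : B ⊗[k] B →ₗ[k] B :=
  μ ∘ₗ act2AlgHom G

theorem mul'_comp_act3AlgHom_assoc_tmul_comp_assoc (Z : H ⊗[k] H) (η : H) :
    μ ∘ₗ (μ).lTensor B ∘ₗ
        act3AlgHom (Algebra.TensorProduct.assoc k k k H H H (Z ⊗ₜ η)) ∘ₗ
        (TensorProduct.assoc k B B B).toLinearMap =
      μ ∘ₗ TensorProduct.map (μ ∘ₗ act2AlgHom Z) (Algebra.lsmul k k B η) := by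
  induction Z using TensorProduct.induction_on with
  | zero => ext; simp
  | tmul ξ ξ' => ext a b c; simp [act3AlgHom_tmul, mul_assoc]
  | add Z Z' hZ hZ' =>
    rw [TensorProduct.add_tmul, map_add, map_add, LinearMap.add_comp, LinearMap.comp_add,
      LinearMap.comp_add, hZ, hZ', map_add, LinearMap.comp_add, TensorProduct.map_add_left,
      LinearMap.comp_add]

theorem mul'_comp_act3AlgHom_tmul (ξ : H) (W : H ⊗[k] H) :
    μ ∘ₗ (μ).lTensor B ∘ₗ act3AlgHom (ξ ⊗ₜ W) =
      μ ∘ₗ TensorProduct.map (Algebra.lsmul k k B ξ) (μ ∘ₗ act2AlgHom W) := by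
  rw [act3AlgHom_tmul, LinearMap.lTensor_comp_map]

section Equivariant

variable (hmul : ∀ ξ : H, Algebra.lsmul k k B ξ ∘ₗ LinearMap.mul' k B =
  LinearMap.mul' k B ∘ₗ act2AlgHom (Coalgebra.comul (R := k) ξ))
include hmul

theorem mul'_comp_act2AlgHom_comp_rTensor_mul' (S : H ⊗[k] H) :
    μ ∘ₗ act2AlgHom S ∘ₗ (μ).rTensor B =
      μ ∘ₗ (μ).lTensor B ∘ₗ act3AlgHom (Δ₁ k H S) ∘ₗ
        (TensorProduct.assoc k B B B).toLinearMap := by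
  induction S using TensorProduct.induction_on with
  | zero => simp
  | tmul ξ η =>
    have hΔ₁ : Δ₁ k H (ξ ⊗ₜ η) =
        Algebra.TensorProduct.assoc k k k H H H (Coalgebra.comul (R := k) ξ ⊗ₜ η) := by
      simp [Δ₁, Δ]
    rw [hΔ₁, mul'_comp_act3AlgHom_assoc_tmul_comp_assoc, ← hmul,
      ← LinearMap.map_comp_rTensor]
    rfl
  | add S T hS hT =>
    simp only [map_add, LinearMap.add_comp, LinearMap.comp_add, hS, hT]

theorem mul'_comp_act2AlgHom_comp_lTensor_mul' (S : H ⊗[k] H) :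
    μ ∘ₗ act2AlgHom S ∘ₗ (μ).lTensor B = μ ∘ₗ (μ).lTensor B ∘ₗ act3AlgHom (Δ₂ k H S) := by
  induction S using TensorProduct.induction_on with
  | zero => simp
  | tmul ξ η =>
    have hΔ₂ : Δ₂ k H (ξ ⊗ₜ η) = ξ ⊗ₜ Coalgebra.comul (R := k) η := by simp [Δ₂, Δ]
    rw [hΔ₂, mul'_comp_act3AlgHom_tmul, ← hmul, ← LinearMap.map_comp_lTensor]
    rfl
  | add S T hS hT =>
    simp only [map_add, LinearMap.add_comp, LinearMap.comp_add, hS, hT]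

theorem twistedMul'_assoc {G : H ⊗[k] H}
    (hG : Δ₁ k H G * ι₁₂ k H G = Δ₂ k H G * ι₂₃ k H G) (a b c : B) :
    twistedMul' G (twistedMul' G (a ⊗ₜ b) ⊗ₜ c) =
      twistedMul' G (a ⊗ₜ twistedMul' G (b ⊗ₜ c)) := by
  have hleft := DFunLike.congr_fun (mul'_comp_act2AlgHom_comp_rTensor_mul' hmul G)
    (act2AlgHom G (a ⊗ₜ b) ⊗ₜ c)
  have hright := DFunLike.congr_fun (mul'_comp_act2AlgHom_comp_lTensor_mul' hmul G)
    (a ⊗ₜ act2AlgHom G (b ⊗ₜ c))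
  have hι₁₂ := DFunLike.congr_fun (act3AlgHom_ι₁₂_comp_assoc (M := B) G) ((a ⊗ₜ b) ⊗ₜ c)
  simp only [LinearMap.comp_apply, LinearEquiv.coe_coe, LinearMap.rTensor_tmul,
    LinearMap.lTensor_tmul, TensorProduct.assoc_tmul] at hleft hright hι₁₂
  calc twistedMul' G (twistedMul' G (a ⊗ₜ b) ⊗ₜ c)
      = μ ((μ).lTensor B
          (act3AlgHom (Δ₁ k H G) (act3AlgHom (ι₁₂ k H G) (a ⊗ₜ (b ⊗ₜ c))))) := by
        rw [hι₁₂]; exact hleft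
    _ = μ ((μ).lTensor B
          (act3AlgHom (Δ₂ k H G) (act3AlgHom (ι₂₃ k H G) (a ⊗ₜ (b ⊗ₜ c))))) := by
        rw [← Module.End.mul_apply, ← map_mul, hG, map_mul, Module.End.mul_apply]
    _ = twistedMul' G (a ⊗ₜ twistedMul' G (b ⊗ₜ c)) := by
        rw [act3AlgHom_ι₂₃, LinearMap.lTensor_tmul]; exact hright.symm

theorem smul_twistedMul' {F G : H ⊗[k] H} (hGF : G * F = 1) (ξ : H) (x : B ⊗[k] B) :
    ξ • twistedMul' G x = twistedMul' G (act2AlgHom (F * Coalgebra.comul (R := k) ξ * G) x) :=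
  calc ξ • twistedMul' G x
      = μ (act2AlgHom (Coalgebra.comul (R := k) ξ) (act2AlgHom G x)) :=
        DFunLike.congr_fun (hmul ξ) (act2AlgHom G x)
    _ = μ (act2AlgHom (G * (F * Coalgebra.comul (R := k) ξ * G)) x) := by
        rw [← mul_assoc, ← mul_assoc, hGF, one_mul, map_mul, Module.End.mul_apply]
    _ = twistedMul' G (act2AlgHom (F * Coalgebra.comul (R := k) ξ * G) x) := by
        rw [map_mul, Module.End.mul_apply]; rfl

end Equivariant

section Unit

variable (hone : ∀ ξ : H, ξ • (1 : B) = Coalgebra.counit (R := k) ξ • (1 : B))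
include hone

theorem twistedMul'_one_tmul (T : H ⊗[k] H) (a : B) :
    twistedMul' T (1 ⊗ₜ a) = ε₁ k H T • a := by
  induction T using TensorProduct.induction_on with
  | zero => simp [twistedMul']
  | tmul u v => simp [twistedMul', hone, ε₁, ε, smul_assoc]
  | add S T hS hT =>
    simp only [twistedMul', LinearMap.comp_apply] at hS hT ⊢
    rw [map_add, LinearMap.add_apply, map_add, hS, hT, map_add, add_smul]

theorem twistedMul'_tmul_one (T : H ⊗[k] H) (a : B) :
    twistedMul' T (a ⊗ₜ 1) = ε₂ k H T • a := by
  induction T using TensorProduct.induction_on with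
  | zero => simp [twistedMul']
  | tmul u v => simp [twistedMul', hone, ε₂, ε, smul_assoc]
  | add S T hS hT =>
    simp only [twistedMul', LinearMap.comp_apply] at hS hT ⊢
    rw [map_add, LinearMap.add_apply, map_add, hS, hT, map_add, add_smul]

end Unit

end TwistedProduct

theorem hodgeL_apply (Bm : A →ₗ[k] A →ₗ[k] A) (T : H ⊗[k] H) (a b : A) :
    hodgeL k H A Bm T a b = TensorProduct.lift Bm (act2AlgHom T (a ⊗ₜ b)) :=
  rfl

theorem hodgeL_mul_apply (T : H ⊗[k] H) (a b : A) :
    hodgeL k H A (LinearMap.mul k A) T a b = twistedMul' T (a ⊗ₜ b) :=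
  hodgeL_apply k H A _ T a b

theorem lift_hodgeL_mul (T : H ⊗[k] H) :
    TensorProduct.lift (hodgeL k H A (LinearMap.mul k A) T) = twistedMul' T :=
  TensorProduct.ext' (hodgeL_mul_apply k H A T)

theorem lsmul_comp_mul'_of_smul_mul
    (hMA : ∀ (ξ : H) (a b : A),
      ξ • (a * b) = hodgeL k H A (LinearMap.mul k A) (Coalgebra.comul (R := k) ξ) a b)
    (ξ : H) :
    Algebra.lsmul k k A ξ ∘ₗ LinearMap.mul' k A =
      LinearMap.mul' k A ∘ₗ act2AlgHom (Coalgebra.comul (R := k) ξ) :=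
  TensorProduct.ext' fun a b => (hMA ξ a b).trans (hodgeL_mul_apply k H A _ a b)

/-- **Twisting a module algebra.**  Let `A` be a left `H`-module algebra (the module
algebra axioms are the hypotheses `hMA`, `hone`) and `F` a Drinfel'd twist on `H`
with two-sided inverse `Finv`.  Then the twisted product
`a ⋆_F b = Σ (uⱼ ▷ a)·(vⱼ ▷ b)`, `F⁻¹ = Σ uⱼ ⊗ vⱼ`, i.e. `hodgeL (mul) Finv`, is
associative with unit `1`, and `A` with `⋆_F` and the unchanged `H`-action is a left
module algebra over the twisted bialgebra `(H, Δ_F, ε)`. -/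
theorem twisted_module_algebra
    -- `A` is a left `H`-module algebra:
    (hMA : ∀ (ξ : H) (a b : A),
      ξ • (a * b) = hodgeL k H A (LinearMap.mul k A) (Coalgebra.comul (R := k) ξ) a b)
    (hone : ∀ ξ : H, ξ • (1 : A) = Coalgebra.counit (R := k) ξ • (1 : A))
    -- `F` is a Drinfel'd twist on `H`:
    (F Finv : H ⊗[k] H)
    (hF : F * Finv = 1) (hF' : Finv * F = 1)
    (hnorm₁ : ε₁ k H F = 1) (hnorm₂ : ε₂ k H F = 1)
    (hcoc : ι₁₂ k H F * Δ₁ k H F = ι₂₃ k H F * Δ₂ k H F) :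
    -- the twisted product is associative:
    (∀ a b c : A,
      hodgeL k H A (LinearMap.mul k A) Finv
          (hodgeL k H A (LinearMap.mul k A) Finv a b) c =
        hodgeL k H A (LinearMap.mul k A) Finv a
          (hodgeL k H A (LinearMap.mul k A) Finv b c)) ∧
    -- `1` is a unit for the twisted product:
    (∀ a : A, hodgeL k H A (LinearMap.mul k A) Finv 1 a = a) ∧
    (∀ a : A, hodgeL k H A (LinearMap.mul k A) Finv a 1 = a) ∧
    -- `(A, ⋆_F)` is a left `(H, Δ_F, ε)`-module algebra:
    (∀ (ξ : H) (a b : A),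
      ξ • (hodgeL k H A (LinearMap.mul k A) Finv a b) =
        hodgeL k H A (hodgeL k H A (LinearMap.mul k A) Finv)
          (F * Coalgebra.comul (R := k) ξ * Finv) a b) ∧
    (∀ ξ : H, ξ • (1 : A) = Coalgebra.counit (R := k) ξ • (1 : A)) := by
  have hmul := lsmul_comp_mul'_of_smul_mul k H A hMA
  have hε₁ : ε₁ k H Finv = 1 := by simpa [hnorm₁] using congrArg (ε₁ k H) hF
  have hε₂ : ε₂ k H Finv = 1 := by simpa [hnorm₂] using congrArg (ε₂ k H) hF
  refine ⟨fun a b c => ?_, fun a => ?_, fun a => ?_, fun ξ a b => ?_, hone⟩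
  · simp only [hodgeL_mul_apply]
    exact twistedMul'_assoc hmul (cocycle_of_inv k H hF hF' hcoc) a b c
  · rw [hodgeL_mul_apply, twistedMul'_one_tmul hone, hε₁, one_smul]
  · rw [hodgeL_mul_apply, twistedMul'_tmul_one hone, hε₂, one_smul]
  · rw [hodgeL_mul_apply, smul_twistedMul' hmul hF', hodgeL_apply, lift_hodgeL_mul]

end Stmt
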